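/- Let F : ℝ → ℂ be a Schwartz function, let N ≥ 2 be a natural number, and let g : ℝ → [0,1] be smooth with g(y) = 1 for |y| ≤ 1/2 and g(y) = 0 for |y| > 1. Define F_N : ℝ² → ℂ by F_N(z₁, z₂) = g(z₂) Σ_{j=0}^{N} (1/j!) F^{(j)}(z₁) (i z₂)^j. Then: (a) F_N(x, 0) = F(x) for all x ∈ ℝ; (b) F_N(z₁, z₂) = 0 whenever |z₂| > 1; (c) there exists a constant C_N > 0 such that |∂̄F_N(z₁, z₂)| ≤ C_N |z₂|^N ⟨z₁⟩^{−N} for all (z₁, z₂) ∈ ℝ², where ∂̄F_N = ½(∂_{z₁}F_N + i ∂_{z₂}F_N) and ⟨z₁⟩ = (1 + z₁²)^{1/2}. -/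

import Mathlib

open Complex Finset

noncomputable section

/-- The almost analytic extension
`F_N(z₁, z₂) = g(z₂) Σ_{j=0}^{N} (1/j!) F^{(j)}(z₁) (i z₂)^j`. -/
def almostAnalyticExt (F : ℝ → ℂ) (g : ℝ → ℝ) (N : ℕ) (z₁ z₂ : ℝ) : ℂ :=
  (g z₂ : ℂ) * ∑ j ∈ Finset.range (N + 1),
    ((j.factorial : ℂ))⁻¹ * iteratedDeriv j F z₁ * (Complex.I * (z₂ : ℂ)) ^ j

/-- The antiholomorphic derivative `∂̄H = ½(∂_{z₁}H + i ∂_{z₂}H)` of a function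
`H : ℝ² → ℂ` of two real variables. -/
def dbar (H : ℝ → ℝ → ℂ) (z₁ z₂ : ℝ) : ℂ :=
  (1 / 2 : ℂ) * (deriv (fun t => H t z₂) z₁ + Complex.I * deriv (fun t => H z₁ t) z₂)

lemma aux_norm_itd_le (F : ℝ → ℂ) (j : ℕ) (x : ℝ) :
    ‖iteratedDeriv j F x‖ ≤ ‖iteratedFDeriv ℝ j F x‖ := by
  rw [iteratedDeriv_eq_iteratedFDeriv]
  calc ‖iteratedFDeriv ℝ j F x fun _ => 1‖
      ≤ ‖iteratedFDeriv ℝ j F x‖ * ∏ _i : Fin j, ‖(1 : ℝ)‖ :=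
        ContinuousMultilinearMap.le_opNorm _ _
    _ = ‖iteratedFDeriv ℝ j F x‖ := by simp

lemma aux_sqrt_pow_le (x : ℝ) (N : ℕ) :
    Real.sqrt (1 + x ^ 2) ^ N ≤ 2 ^ N * (1 + |x| ^ N) := by
  have h1 : Real.sqrt (1 + x ^ 2) ≤ 1 + |x| := by
    have h2 : Real.sqrt (1 + x ^ 2) ≤ Real.sqrt ((1 + |x|) ^ 2) :=
      Real.sqrt_le_sqrt (by nlinarith [abs_nonneg x, _root_.sq_abs x])
    rwa [Real.sqrt_sq (by positivity)] at h2
  have h3 : Real.sqrt (1 + x ^ 2) ^ N ≤ (1 + |x|) ^ N :=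
    pow_le_pow_left₀ (Real.sqrt_nonneg _) h1 N
  refine h3.trans ?_
  rcases le_total |x| 1 with h | h
  · calc (1 + |x|) ^ N ≤ 2 ^ N := pow_le_pow_left₀ (by positivity) (by linarith) N
      _ ≤ 2 ^ N * (1 + |x| ^ N) := by
          nlinarith [pow_nonneg (abs_nonneg x) N, pow_pos (show (0:ℝ) < 2 by norm_num) N]
  · calc (1 + |x|) ^ N ≤ (2 * |x|) ^ N := pow_le_pow_left₀ (by positivity) (by linarith) N
      _ = 2 ^ N * |x| ^ N := mul_pow _ _ _
      _ ≤ 2 ^ N * (1 + |x| ^ N) := by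
          nlinarith [pow_pos (show (0:ℝ) < 2 by norm_num) N]

/-- **Construction of the almost analytic extension of a Schwartz function.**
For a Schwartz function `F`, an `N ≥ 2`, and a smooth cutoff `g` equal to `1` on
`[−1/2, 1/2]` and `0` outside `[−1, 1]`, the extension `F_N` satisfies:
(a) `F_N(x, 0) = F(x)`; (b) `F_N` vanishes for `|z₂| > 1`;
(c) `|∂̄F_N(z₁, z₂)| ≤ C_N |z₂|^N ⟨z₁⟩^{−N}`. -/
theorem almost_analytic_extension_schwartz
    (F : SchwartzMap ℝ ℂ) (N : ℕ) (hN : 2 ≤ N)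
    (g : ℝ → ℝ) (hg : ContDiff ℝ (⊤ : ℕ∞) g) (hg01 : ∀ y, g y ∈ Set.Icc (0 : ℝ) 1)
    (hg1 : ∀ y : ℝ, |y| ≤ 1 / 2 → g y = 1) (hg0 : ∀ y : ℝ, 1 < |y| → g y = 0) :
    (∀ x : ℝ, almostAnalyticExt (⇑F) g N x 0 = F x) ∧
    (∀ z₁ z₂ : ℝ, 1 < |z₂| → almostAnalyticExt (⇑F) g N z₁ z₂ = 0) ∧
    (∃ C_N : ℝ, 0 < C_N ∧ ∀ z₁ z₂ : ℝ,
      ‖dbar (almostAnalyticExt (⇑F) g N) z₁ z₂‖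
        ≤ C_N * |z₂| ^ N / Real.sqrt (1 + z₁ ^ 2) ^ N) := by
  refine ⟨?_, ?_, ?_⟩
  · -- (a)
    intro x
    simp only [almostAnalyticExt, Complex.ofReal_zero, mul_zero]
    rw [hg1 0 (by norm_num)]
    rw [Finset.sum_eq_single 0]
    · simp [iteratedDeriv_zero]
    · intro b _ hb; simp [zero_pow hb]
    · intro h; exact absurd (Finset.mem_range.2 (Nat.succ_pos N)) h
  · -- (b)
    intro z₁ z₂ h
    simp [almostAnalyticExt, hg0 z₂ h]
  · -- (c)
    -- differentiability of iterated derivatives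
    have hDj : ∀ j : ℕ, Differentiable ℝ (iteratedDeriv j (⇑F)) := by
      intro j
      rw [iteratedDeriv_eq_iterate]
      exact (ContDiff.iterate_deriv j (F.smooth ⊤)).differentiable (by simp)
    -- the z₁-derivative
    have hd1 : ∀ z₁ z₂ : ℝ, HasDerivAt (fun t => almostAnalyticExt (⇑F) g N t z₂)
        ((g z₂ : ℂ) * ∑ j ∈ Finset.range (N + 1),
          ((j.factorial : ℂ))⁻¹ * iteratedDeriv (j + 1) (⇑F) z₁ * (Complex.I * (z₂ : ℂ)) ^ j)
        z₁ := by
      intro z₁ z₂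
      have h : ∀ j ∈ Finset.range (N + 1),
          HasDerivAt (fun t => ((j.factorial : ℂ))⁻¹ * iteratedDeriv j (⇑F) t *
              (Complex.I * (z₂ : ℂ)) ^ j)
            (((j.factorial : ℂ))⁻¹ * iteratedDeriv (j + 1) (⇑F) z₁ *
              (Complex.I * (z₂ : ℂ)) ^ j) z₁ := by
        intro j _
        have hj : HasDerivAt (iteratedDeriv j (⇑F)) (iteratedDeriv (j + 1) (⇑F) z₁) z₁ := by
          rw [iteratedDeriv_succ]
          exact (hDj j z₁).hasDerivAt
        exact (hj.const_mul _).mul_const _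
      simpa only [almostAnalyticExt] using (HasDerivAt.fun_sum h).const_mul ((g z₂ : ℂ))
    -- the z₂-derivative
    have hd2 : ∀ z₁ z₂ : ℝ, HasDerivAt (fun t => almostAnalyticExt (⇑F) g N z₁ t)
        (((deriv g z₂ : ℝ) : ℂ) * ∑ j ∈ Finset.range (N + 1),
            ((j.factorial : ℂ))⁻¹ * iteratedDeriv j (⇑F) z₁ * (Complex.I * (z₂ : ℂ)) ^ j
          + (g z₂ : ℂ) * ∑ j ∈ Finset.range (N + 1),
            ((j.factorial : ℂ))⁻¹ * iteratedDeriv j (⇑F) z₁ *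
              ((j : ℂ) * (Complex.I * (z₂ : ℂ)) ^ (j - 1) * Complex.I)) z₂ := by
      intro z₁ z₂
      have hgC : HasDerivAt (fun t : ℝ => ((g t : ℝ) : ℂ)) ((deriv g z₂ : ℝ) : ℂ) z₂ :=
        ((hg.differentiable (by simp) z₂).hasDerivAt).ofReal_comp
      have hbase : HasDerivAt (fun t : ℝ => Complex.I * (t : ℂ)) Complex.I z₂ := by
        simpa using (Complex.ofRealCLM.hasDerivAt (x := z₂)).const_mul Complex.I
      have hsum : HasDerivAt
          (fun t : ℝ => ∑ j ∈ Finset.range (N + 1),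
            ((j.factorial : ℂ))⁻¹ * iteratedDeriv j (⇑F) z₁ * (Complex.I * (t : ℂ)) ^ j)
          (∑ j ∈ Finset.range (N + 1),
            ((j.factorial : ℂ))⁻¹ * iteratedDeriv j (⇑F) z₁ *
              ((j : ℂ) * (Complex.I * (z₂ : ℂ)) ^ (j - 1) * Complex.I)) z₂ := by
        refine HasDerivAt.fun_sum fun j _ => ?_
        have hp : HasDerivAt (fun t : ℝ => (Complex.I * (t : ℂ)) ^ j)
            ((j : ℂ) * (Complex.I * (z₂ : ℂ)) ^ (j - 1) * Complex.I) z₂ := by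
          have := (hasDerivAt_pow j ((Complex.I : ℂ) * (z₂ : ℂ))).comp z₂ hbase
          simpa [Function.comp_def] using this
        exact hp.const_mul _
      simpa only [almostAnalyticExt] using hgC.fun_mul hsum
    -- the dbar formula
    have hform : ∀ z₁ z₂ : ℝ, dbar (almostAnalyticExt (⇑F) g N) z₁ z₂ =
        (1 / 2 : ℂ) * ((g z₂ : ℂ) * (((N.factorial : ℂ))⁻¹ * iteratedDeriv (N + 1) (⇑F) z₁ *
            (Complex.I * (z₂ : ℂ)) ^ N)
          + Complex.I * ((deriv g z₂ : ℝ) : ℂ) * ∑ j ∈ Finset.range (N + 1),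
            ((j.factorial : ℂ))⁻¹ * iteratedDeriv j (⇑F) z₁ * (Complex.I * (z₂ : ℂ)) ^ j) := by
      intro z₁ z₂
      rw [dbar, (hd1 z₁ z₂).deriv, (hd2 z₁ z₂).deriv]
      have hkey : ∑ j ∈ Finset.range (N + 1),
            ((j.factorial : ℂ))⁻¹ * iteratedDeriv j (⇑F) z₁ *
              ((j : ℂ) * (Complex.I * (z₂ : ℂ)) ^ (j - 1) * Complex.I)
          = (∑ j ∈ Finset.range N,
              ((j.factorial : ℂ))⁻¹ * iteratedDeriv (j + 1) (⇑F) z₁ *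
                (Complex.I * (z₂ : ℂ)) ^ j) * Complex.I := by
        rw [Finset.sum_range_succ']
        rw [Finset.sum_mul]
        simp only [Nat.cast_zero, zero_mul, mul_zero, add_zero, Nat.add_sub_cancel]
        refine Finset.sum_congr rfl fun j _ => ?_
        have hfac : ((Nat.factorial (j + 1) : ℂ))⁻¹ * ((j : ℂ) + 1) = ((j.factorial : ℂ))⁻¹ := by
          rw [Nat.factorial_succ]
          have h1 : ((j.factorial : ℂ)) ≠ 0 := Nat.cast_ne_zero.2 j.factorial_ne_zero
          have h2 : ((j : ℂ) + 1) ≠ 0 := by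
            intro h
            have := congrArg Complex.re h
            simp at this
            nlinarith [Nat.cast_nonneg (α := ℝ) j, this]
          push_cast
          field_simp
        push_cast
        linear_combination (iteratedDeriv (j + 1) (⇑F) z₁ * (Complex.I * (z₂ : ℂ)) ^ j *
          Complex.I) * hfac
      rw [hkey, Finset.sum_range_succ]
      linear_combination ((g z₂ : ℂ) * (∑ j ∈ Finset.range N,
        ((j.factorial : ℂ))⁻¹ * iteratedDeriv (j + 1) (⇑F) z₁ *
          (Complex.I * (z₂ : ℂ)) ^ j) / 2) * Complex.I_mul_I
    -- decay constants
    have hdecay : ∀ j : ℕ, ∃ C : ℝ, 0 < C ∧ ∀ x : ℝ,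
        ‖iteratedDeriv j (⇑F) x‖ * Real.sqrt (1 + x ^ 2) ^ N ≤ C := by
      intro j
      obtain ⟨C0, hC0, h0⟩ := F.decay 0 j
      obtain ⟨C1, hC1, h1⟩ := F.decay N j
      refine ⟨2 ^ N * (C0 + C1), by positivity, fun x => ?_⟩
      have hb := aux_norm_itd_le (⇑F) j x
      have hs := aux_sqrt_pow_le x N
      calc ‖iteratedDeriv j (⇑F) x‖ * Real.sqrt (1 + x ^ 2) ^ N
          ≤ ‖iteratedFDeriv ℝ j (⇑F) x‖ * (2 ^ N * (1 + |x| ^ N)) :=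
            mul_le_mul hb hs (by positivity) (norm_nonneg _)
        _ = 2 ^ N * (‖iteratedFDeriv ℝ j (⇑F) x‖ + |x| ^ N * ‖iteratedFDeriv ℝ j (⇑F) x‖) := by
            ring
        _ ≤ 2 ^ N * (C0 + C1) := by
            have ha := h0 x
            have hbb := h1 x
            simp only [pow_zero, one_mul, Real.norm_eq_abs] at ha hbb
            have := mul_le_mul_of_nonneg_left (add_le_add ha hbb)
              (le_of_lt (pow_pos (show (0:ℝ) < 2 by norm_num) N))
            linarith
    choose Cd hCdpos hCd using hdecay
    set B : ℝ := ∑ j ∈ Finset.range (N + 2), Cd j with hBdef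
    have hBpos : 0 < B := Finset.sum_pos (fun j _ => hCdpos j) ⟨0, by simp⟩
    have hCd_le_B : ∀ j, j < N + 2 → Cd j ≤ B := fun j hj =>
      Finset.single_le_sum (fun i _ => (hCdpos i).le) (Finset.mem_range.2 hj)
    -- bound on deriv g
    have hgdc : Continuous (deriv g) := hg.continuous_deriv (by simp)
    obtain ⟨M₀, hM₀⟩ := (isCompact_Icc (a := (-2 : ℝ)) (b := 2)).exists_bound_of_continuousOn
      hgdc.continuousOn
    set M : ℝ := max M₀ 1 with hMdef
    have hM1 : (1 : ℝ) ≤ M := le_max_right _ _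
    have hgd0 : ∀ y : ℝ, 1 < |y| → deriv g y = 0 := by
      intro y hy
      have hev : g =ᶠ[nhds y] fun _ => 0 := by
        have hopen : IsOpen {t : ℝ | 1 < |t|} := isOpen_lt continuous_const continuous_abs
        filter_upwards [hopen.mem_nhds hy] with t ht using hg0 t ht
      rw [hev.deriv_eq]; exact deriv_const y 0
    have hgd1 : ∀ y : ℝ, |y| < 1 / 2 → deriv g y = 0 := by
      intro y hy
      have hev : g =ᶠ[nhds y] fun _ => 1 := by
        have hopen : IsOpen {t : ℝ | |t| < 1 / 2} := isOpen_lt continuous_abs continuous_const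
        filter_upwards [hopen.mem_nhds hy] with t ht using hg1 t ht.le
      rw [hev.deriv_eq]; exact deriv_const y 1
    have hMb : ∀ y : ℝ, |deriv g y| ≤ M := by
      intro y
      by_cases hy : y ∈ Set.Icc (-2 : ℝ) 2
      · exact le_trans (by simpa [Real.norm_eq_abs] using hM₀ y hy) (le_max_left _ _)
      · have h2 : 2 < |y| := by
          by_contra h
          exact hy (abs_le.mp (not_lt.mp h))
        rw [hgd0 y (by linarith)]
        simpa using le_trans zero_le_one hM1
    -- bounds on g
    have hgb : ∀ y : ℝ, |g y| ≤ 1 := fun y =>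
      abs_le.2 ⟨by linarith [(hg01 y).1], (hg01 y).2⟩
    have hMpos : 0 < M := lt_of_lt_of_le one_pos hM1
    refine ⟨Cd (N + 1) + M * B * 2 ^ N,
      add_pos (hCdpos (N + 1)) (mul_pos (mul_pos hMpos hBpos)
        (pow_pos (by norm_num) N)), fun z₁ z₂ => ?_⟩
    have hDpos : 0 < Real.sqrt (1 + z₁ ^ 2) ^ N :=
      pow_pos (Real.sqrt_pos.2 (by positivity)) N
    rw [hform, le_div_iff₀ hDpos]
    set D : ℝ := Real.sqrt (1 + z₁ ^ 2) ^ N with hDdef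
    set X : ℂ := (g z₂ : ℂ) * (((N.factorial : ℂ))⁻¹ * iteratedDeriv (N + 1) (⇑F) z₁ *
        (Complex.I * (z₂ : ℂ)) ^ N) with hXdef
    set Y : ℂ := Complex.I * ((deriv g z₂ : ℝ) : ℂ) * ∑ j ∈ Finset.range (N + 1),
        ((j.factorial : ℂ))⁻¹ * iteratedDeriv j (⇑F) z₁ * (Complex.I * (z₂ : ℂ)) ^ j with hYdef
    have hfact1 : (1 : ℝ) ≤ (N.factorial : ℝ) := by exact_mod_cast N.factorial_pos
    have hXbound : ‖X‖ * D ≤ Cd (N + 1) * |z₂| ^ N := by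
      have hXnorm : ‖X‖ = |g z₂| * ((N.factorial : ℝ))⁻¹ * ‖iteratedDeriv (N + 1) (⇑F) z₁‖ *
          |z₂| ^ N := by
        rw [hXdef]
        simp [norm_mul, norm_pow, norm_inv, Real.norm_eq_abs]
        ring
      rw [hXnorm]
      have h1 : |g z₂| * ((N.factorial : ℝ))⁻¹ ≤ 1 := by
        have := hgb z₂
        have h2 : ((N.factorial : ℝ))⁻¹ ≤ 1 := by
          rw [inv_le_one_iff₀]; right; exact hfact1
        calc |g z₂| * ((N.factorial : ℝ))⁻¹ ≤ 1 * 1 :=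
          mul_le_mul this h2 (by positivity) zero_le_one
          _ = 1 := one_mul 1
      calc |g z₂| * ((N.factorial : ℝ))⁻¹ * ‖iteratedDeriv (N + 1) (⇑F) z₁‖ * |z₂| ^ N * D
          ≤ 1 * (‖iteratedDeriv (N + 1) (⇑F) z₁‖ * D) * |z₂| ^ N := by
            have hh : |g z₂| * ((N.factorial : ℝ))⁻¹ * (‖iteratedDeriv (N + 1) (⇑F) z₁‖ * D)
                ≤ 1 * (‖iteratedDeriv (N + 1) (⇑F) z₁‖ * D) :=
              mul_le_mul_of_nonneg_right h1 (by positivity)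
            calc |g z₂| * ((N.factorial : ℝ))⁻¹ * ‖iteratedDeriv (N + 1) (⇑F) z₁‖ * |z₂| ^ N * D
                = (|g z₂| * ((N.factorial : ℝ))⁻¹ * (‖iteratedDeriv (N + 1) (⇑F) z₁‖ * D)) *
                  |z₂| ^ N := by ring
              _ ≤ 1 * (‖iteratedDeriv (N + 1) (⇑F) z₁‖ * D) * |z₂| ^ N :=
                  mul_le_mul_of_nonneg_right hh (by positivity)
        _ ≤ 1 * Cd (N + 1) * |z₂| ^ N := by
            have := hCd (N + 1) z₁
            have hh : ‖iteratedDeriv (N + 1) (⇑F) z₁‖ * D ≤ Cd (N + 1) := this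
            nlinarith [pow_nonneg (abs_nonneg z₂) N]
        _ = Cd (N + 1) * |z₂| ^ N := by ring
    have hYbound : ‖Y‖ * D ≤ M * B * 2 ^ N * |z₂| ^ N := by
      by_cases hz : 1 / 2 ≤ |z₂| ∧ |z₂| ≤ 1
      · obtain ⟨hz1, hz2⟩ := hz
        have hS : ‖∑ j ∈ Finset.range (N + 1),
            ((j.factorial : ℂ))⁻¹ * iteratedDeriv j (⇑F) z₁ * (Complex.I * (z₂ : ℂ)) ^ j‖ * D
            ≤ B * (2 ^ N * |z₂| ^ N) := by
          have hterm : ∀ j ∈ Finset.range (N + 1),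
              ‖((j.factorial : ℂ))⁻¹ * iteratedDeriv j (⇑F) z₁ *
                (Complex.I * (z₂ : ℂ)) ^ j‖ * D ≤ Cd j * (2 ^ N * |z₂| ^ N) := by
            intro j hj
            have hn : ‖((j.factorial : ℂ))⁻¹ * iteratedDeriv j (⇑F) z₁ *
                (Complex.I * (z₂ : ℂ)) ^ j‖ =
                ((j.factorial : ℝ))⁻¹ * ‖iteratedDeriv j (⇑F) z₁‖ * |z₂| ^ j := by
              simp [norm_mul, norm_pow, norm_inv, Real.norm_eq_abs]
            rw [hn]
            have hzj : |z₂| ^ j ≤ 2 ^ N * |z₂| ^ N := by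
              have h1 : |z₂| ^ j ≤ 1 := pow_le_one₀ (abs_nonneg _) hz2
              have h2 : (1 : ℝ) ≤ 2 ^ N * |z₂| ^ N := by
                have : ((1 : ℝ) / 2) ^ N ≤ |z₂| ^ N := pow_le_pow_left₀ (by norm_num) hz1 N
                have h3 : (2 : ℝ) ^ N * ((1 : ℝ) / 2) ^ N = 1 := by
                  rw [← mul_pow]; norm_num
                nlinarith [pow_pos (show (0:ℝ) < 2 by norm_num) N]
              linarith
            have hfj : ((j.factorial : ℝ))⁻¹ ≤ 1 := by
              rw [inv_le_one_iff₀]; right; exact_mod_cast j.factorial_pos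
            have hCdj := hCd j z₁
            calc ((j.factorial : ℝ))⁻¹ * ‖iteratedDeriv j (⇑F) z₁‖ * |z₂| ^ j * D
                ≤ 1 * (‖iteratedDeriv j (⇑F) z₁‖ * D) * (2 ^ N * |z₂| ^ N) := by
                  have e1 : ((j.factorial : ℝ))⁻¹ * ‖iteratedDeriv j (⇑F) z₁‖ * |z₂| ^ j * D =
                      (((j.factorial : ℝ))⁻¹) * ((‖iteratedDeriv j (⇑F) z₁‖ * D)) * |z₂| ^ j := by
                    ring
                  rw [e1, one_mul]
                  have e2 : ((j.factorial : ℝ))⁻¹ * (‖iteratedDeriv j (⇑F) z₁‖ * D) ≤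
                      ‖iteratedDeriv j (⇑F) z₁‖ * D := by
                    nlinarith [norm_nonneg (iteratedDeriv j (⇑F) z₁), hDpos.le,
                      mul_nonneg (norm_nonneg (iteratedDeriv j (⇑F) z₁)) hDpos.le]
                  exact mul_le_mul e2 hzj (by positivity)
                    (by positivity)
              _ ≤ 1 * Cd j * (2 ^ N * |z₂| ^ N) := by
                  have := mul_le_mul_of_nonneg_right hCdj
                    (show (0:ℝ) ≤ 2 ^ N * |z₂| ^ N by positivity)
                  nlinarith
              _ = Cd j * (2 ^ N * |z₂| ^ N) := by ring
          calc ‖∑ j ∈ Finset.range (N + 1),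
                ((j.factorial : ℂ))⁻¹ * iteratedDeriv j (⇑F) z₁ *
                  (Complex.I * (z₂ : ℂ)) ^ j‖ * D
              ≤ (∑ j ∈ Finset.range (N + 1),
                ‖((j.factorial : ℂ))⁻¹ * iteratedDeriv j (⇑F) z₁ *
                  (Complex.I * (z₂ : ℂ)) ^ j‖) * D :=
                mul_le_mul_of_nonneg_right (norm_sum_le _ _) hDpos.le
            _ = ∑ j ∈ Finset.range (N + 1),
                ‖((j.factorial : ℂ))⁻¹ * iteratedDeriv j (⇑F) z₁ *
                  (Complex.I * (z₂ : ℂ)) ^ j‖ * D := Finset.sum_mul _ _ _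
            _ ≤ ∑ j ∈ Finset.range (N + 1), Cd j * (2 ^ N * |z₂| ^ N) :=
                Finset.sum_le_sum hterm
            _ = (∑ j ∈ Finset.range (N + 1), Cd j) * (2 ^ N * |z₂| ^ N) :=
                (Finset.sum_mul _ _ _).symm
            _ ≤ B * (2 ^ N * |z₂| ^ N) := by
                have : (∑ j ∈ Finset.range (N + 1), Cd j) ≤ B := by
                  rw [hBdef]
                  exact Finset.sum_le_sum_of_subset_of_nonneg
                    (Finset.range_subset_range.2 (by omega)) (fun i _ _ => (hCdpos i).le)
                exact mul_le_mul_of_nonneg_right this (by positivity)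
        have hYnorm : ‖Y‖ = |deriv g z₂| * ‖∑ j ∈ Finset.range (N + 1),
            ((j.factorial : ℂ))⁻¹ * iteratedDeriv j (⇑F) z₁ * (Complex.I * (z₂ : ℂ)) ^ j‖ := by
          rw [hYdef]
          simp [norm_mul, Real.norm_eq_abs]
        rw [hYnorm]
        calc |deriv g z₂| * ‖∑ j ∈ Finset.range (N + 1),
              ((j.factorial : ℂ))⁻¹ * iteratedDeriv j (⇑F) z₁ *
                (Complex.I * (z₂ : ℂ)) ^ j‖ * D
            ≤ M * (‖∑ j ∈ Finset.range (N + 1),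
              ((j.factorial : ℂ))⁻¹ * iteratedDeriv j (⇑F) z₁ *
                (Complex.I * (z₂ : ℂ)) ^ j‖ * D) := by
              rw [mul_assoc]
              exact mul_le_mul_of_nonneg_right (hMb z₂)
                (mul_nonneg (norm_nonneg _) hDpos.le)
          _ ≤ M * (B * (2 ^ N * |z₂| ^ N)) :=
              mul_le_mul_of_nonneg_left hS (by linarith)
          _ = M * B * 2 ^ N * |z₂| ^ N := by ring
      · have hzero : deriv g z₂ = 0 := by
          rcases lt_or_ge |z₂| (1 / 2) with h | h
          · exact hgd1 z₂ h
          · rcases le_or_gt |z₂| 1 with h' | h'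
            · exact absurd ⟨h, h'⟩ hz
            · exact hgd0 z₂ h'
        have : Y = 0 := by rw [hYdef, hzero]; simp
        rw [this]
        simp only [norm_zero, zero_mul]
        positivity
    calc ‖(1 / 2 : ℂ) * (X + Y)‖ * D ≤ (‖X‖ + ‖Y‖) * D := by
          rw [norm_mul]
          have h1 : ‖(1 / 2 : ℂ)‖ = 1 / 2 := by simp
          rw [h1]
          have h2 : ‖X + Y‖ ≤ ‖X‖ + ‖Y‖ := norm_add_le _ _
          nlinarith [norm_nonneg (X + Y), norm_nonneg X, norm_nonneg Y, hDpos.le]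
      _ = ‖X‖ * D + ‖Y‖ * D := by ring
      _ ≤ Cd (N + 1) * |z₂| ^ N + M * B * 2 ^ N * |z₂| ^ N := add_le_add hXbound hYbound
      _ = (Cd (N + 1) + M * B * 2 ^ N) * |z₂| ^ N := by ring

end
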